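/- Let n ≥ 2 and let G(x) = (∏_{i=1}^n x_i)^{1/n} be the geometric mean on (0,1)^n. Then the global orness value of G over [0,1]^n equals −1/(n−1) + ((n+1)/(n−1)) (n/(n+1))^n. -/

import Mathlib

/-!
The uniform measure on the open cube `(0,1)ⁿ` is the product of `n` copies of the uniform
measure on `(0,1)`. Since `G(x)` is the product of the one-variable functions `xᵢ ^ (1/n)`,
Fubini gives `Ḡ = (∫₀¹ y ^ (1/n) dy)ⁿ = (n/(n+1))ⁿ`. For `Min` and `Max` use the layer-cake
formula `∫ f = ∫₀¹ P(f > t) dt` for `[0,1]`-valued `f`: `P(Min > t) = (1-t)ⁿ` and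
`P(Max > t) = 1 - tⁿ` give `M̄in = 1/(n+1)` and `M̄ax = n/(n+1)`, and the orness value is
then a rational identity in `n`.
-/

open MeasureTheory Set

theorem integral_eq_intervalIntegral_measureReal_lt {Ω : Type*} [MeasurableSpace Ω]
    {μ : Measure Ω} [IsFiniteMeasure μ] {f : Ω → ℝ} (hf : AEStronglyMeasurable f μ)
    (hf_mem : ∀ᵐ ω ∂μ, f ω ∈ Icc 0 1) :
    ∫ ω, f ω ∂μ = ∫ t in (0 : ℝ)..1, μ.real {ω | t < f ω} := by
  have hint : Integrable f μ := Integrable.mono' (integrable_const 1) hf <|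
    hf_mem.mono fun _ h ↦ abs_le.2 ⟨by linarith [h.1], h.2⟩
  have h_tail : ∀ t ∈ Ioi (0 : ℝ) \ Ioc 0 1, μ.real {ω | t < f ω} = 0 := by
    rintro t ⟨ht0, ht1⟩
    have h1t : 1 < t := not_le.1 fun h ↦ ht1 ⟨ht0, h⟩
    have hsub : {ω | t < f ω} ⊆ {ω | f ω ∉ Icc 0 1} := fun ω (hω : t < f ω) h ↦ by
      linarith [h.2]
    exact (measureReal_eq_zero_iff).2 (measure_mono_null hsub (ae_iff.1 hf_mem))
  rw [hint.integral_eq_integral_meas_lt (hf_mem.mono fun _ h ↦ h.1),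
    intervalIntegral.integral_of_le zero_le_one,
    setIntegral_eq_of_subset_of_forall_sdiff_eq_zero measurableSet_Ioi Ioc_subset_Ioi_self h_tail]

instance isProbabilityMeasure_volume_restrict_Ioo_zero_one :
    IsProbabilityMeasure (volume.restrict (Ioo (0 : ℝ) 1)) :=
  ⟨by simp⟩

theorem measureReal_restrict_Ioo_zero_one_Ioi {t : ℝ} (ht : t ∈ Icc 0 1) :
    (volume.restrict (Ioo (0 : ℝ) 1)).real (Ioi t) = 1 - t := by
  rw [measureReal_restrict_apply measurableSet_Ioi, Ioi_inter_Ioo, max_eq_left ht.1,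
    Real.volume_real_Ioo_of_le ht.2]

theorem measureReal_restrict_Ioo_zero_one_Iic {t : ℝ} (ht : t ∈ Icc 0 1) :
    (volume.restrict (Ioo (0 : ℝ) 1)).real (Iic t) = t := by
  have h := measureReal_compl (μ := volume.restrict (Ioo (0 : ℝ) 1)) (measurableSet_Iic (a := t))
  rw [compl_Iic, measureReal_restrict_Ioo_zero_one_Ioi ht, probReal_univ] at h
  linarith

theorem integral_Ioo_zero_one_rpow {r : ℝ} (hr : -1 < r) :
    ∫ y in Ioo (0 : ℝ) 1, y ^ r = 1 / (r + 1) := by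
  rw [← integral_Ioc_eq_integral_Ioo, ← intervalIntegral.integral_of_le zero_le_one,
    integral_rpow (Or.inl hr), Real.one_rpow, Real.zero_rpow (by linarith)]
  ring

variable {ι : Type*} [Fintype ι]

theorem volume_restrict_univ_pi_Ioo_zero_one :
    (volume : Measure (ι → ℝ)).restrict (univ.pi fun _ ↦ Ioo 0 1) =
      Measure.pi fun _ ↦ volume.restrict (Ioo (0 : ℝ) 1) := by
  rw [volume_pi, Measure.restrict_pi_pi]

theorem ae_mem_Ioo_zero_one_pi :
    ∀ᵐ x ∂(Measure.pi fun _ : ι ↦ volume.restrict (Ioo (0 : ℝ) 1)), ∀ i, x i ∈ Ioo 0 1 :=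
  ae_all_iff.2 fun _ ↦ Measure.tendsto_eval_ae_ae.eventually (ae_restrict_mem measurableSet_Ioo)

theorem measureReal_pi_univ_pi_const {α : Type*} [MeasurableSpace α] {ν : Measure α}
    [SigmaFinite ν] (s : Set α) :
    (Measure.pi fun _ : ι ↦ ν).real (univ.pi fun _ ↦ s) = ν.real s ^ Fintype.card ι := by
  simp [measureReal_def, Measure.pi_pi]

theorem integral_prod_rpow_unitCube {r : ℝ} (hr : -1 < r) :
    ∫ x in univ.pi fun _ : ι ↦ Ioo (0 : ℝ) 1, (∏ i, x i) ^ r = (1 / (r + 1)) ^ Fintype.card ι := by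
  have hcube : MeasurableSet (univ.pi fun _ : ι ↦ Ioo (0 : ℝ) 1) :=
    .univ_pi fun _ ↦ measurableSet_Ioo
  rw [setIntegral_congr_fun hcube fun x hx ↦
      (Real.finsetProd_rpow _ _ (fun i _ ↦ (hx i (mem_univ i)).1.le) r).symm,
    volume_restrict_univ_pi_Ioo_zero_one, integral_fintype_prod_eq_pow fun y : ℝ ↦ y ^ r,
    integral_Ioo_zero_one_rpow hr]

variable (H : (Finset.univ : Finset ι).Nonempty)

theorem integral_inf'_unitCube :
    ∫ x in univ.pi fun _ : ι ↦ Ioo (0 : ℝ) 1, Finset.univ.inf' H x =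
      1 / (Fintype.card ι + 1) := by
  have h_mem : ∀ᵐ x ∂(Measure.pi fun _ : ι ↦ volume.restrict (Ioo (0 : ℝ) 1)),
      Finset.univ.inf' H x ∈ Icc 0 1 := ae_mem_Ioo_zero_one_pi.mono fun x hx ↦
    ⟨Finset.le_inf' H _ fun i _ ↦ (hx i).1.le,
      (Finset.inf'_le _ (Finset.mem_univ H.choose)).trans (hx _).2.le⟩
  have h_tail : EqOn
      (fun t ↦ (Measure.pi fun _ : ι ↦ volume.restrict (Ioo (0 : ℝ) 1)).real
        {x | t < Finset.univ.inf' H x})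
      (fun t ↦ (1 - t) ^ Fintype.card ι) (uIcc 0 1) := fun t ht ↦ by
    have hset : {x : ι → ℝ | t < Finset.univ.inf' H x} = univ.pi fun _ ↦ Ioi t := by
      ext x; simp [Finset.lt_inf'_iff]
    rw [uIcc_of_le zero_le_one] at ht
    simp only [hset, measureReal_pi_univ_pi_const, measureReal_restrict_Ioo_zero_one_Ioi ht]
  rw [volume_restrict_univ_pi_Ioo_zero_one,
    integral_eq_intervalIntegral_measureReal_lt
      (Continuous.finset_inf'_apply H fun i _ ↦ continuous_apply i).aestronglyMeasurable h_mem,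
    intervalIntegral.integral_congr h_tail]
  simp [intervalIntegral.integral_comp_sub_left (fun s ↦ s ^ Fintype.card ι) 1, integral_pow]

theorem integral_sup'_unitCube :
    ∫ x in univ.pi fun _ : ι ↦ Ioo (0 : ℝ) 1, Finset.univ.sup' H x =
      Fintype.card ι / (Fintype.card ι + 1) := by
  have h_mem : ∀ᵐ x ∂(Measure.pi fun _ : ι ↦ volume.restrict (Ioo (0 : ℝ) 1)),
      Finset.univ.sup' H x ∈ Icc 0 1 := ae_mem_Ioo_zero_one_pi.mono fun x hx ↦
    ⟨(hx _).1.le.trans (Finset.le_sup' _ (Finset.mem_univ H.choose)),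
      Finset.sup'_le H _ fun i _ ↦ (hx i).2.le⟩
  have h_tail : EqOn
      (fun t ↦ (Measure.pi fun _ : ι ↦ volume.restrict (Ioo (0 : ℝ) 1)).real
        {x | t < Finset.univ.sup' H x})
      (fun t ↦ 1 - t ^ Fintype.card ι) (uIcc 0 1) := fun t ht ↦ by
    have hset : {x : ι → ℝ | t < Finset.univ.sup' H x} = (univ.pi fun _ ↦ Iic t)ᶜ := by
      ext x; simp [Finset.lt_sup'_iff, Pi.le_def]
    rw [uIcc_of_le zero_le_one] at ht
    simp only [hset, measureReal_compl (MeasurableSet.univ_pi fun _ ↦ measurableSet_Iic),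
      probReal_univ, measureReal_pi_univ_pi_const, measureReal_restrict_Ioo_zero_one_Iic ht]
  rw [volume_restrict_univ_pi_Ioo_zero_one,
    integral_eq_intervalIntegral_measureReal_lt
      (Continuous.finset_sup'_apply H fun i _ ↦ continuous_apply i).aestronglyMeasurable h_mem,
    intervalIntegral.integral_congr h_tail, intervalIntegral.integral_sub intervalIntegrable_const
      (intervalIntegral.intervalIntegrable_pow _)]
  simp only [intervalIntegral.integral_const, integral_pow, smul_eq_mul, mul_one, one_pow,
    sub_zero, ne_eq, Nat.add_eq_zero_iff, one_ne_zero, and_false, not_false_eq_true, zero_pow]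
  field_simp
  ring

/-- For `n ≥ 2`, the global orness value over `[0,1]^n` of the geometric mean
`G(x) = (∏ᵢ xᵢ)^{1/n}`, namely `(Ḡ − M̄in)/(M̄ax − M̄in)`, equals
`−1/(n−1) + ((n+1)/(n−1))(n/(n+1))ⁿ`. -/
theorem global_orness_geometric_mean (n : ℕ) (hn : 2 ≤ n) :
    ((∫ x in Set.univ.pi fun _ : Fin n => Set.Ioo (0 : ℝ) 1,
          (∏ i : Fin n, x i) ^ (1 / (n : ℝ))) -
        (∫ x in Set.univ.pi fun _ : Fin n => Set.Ioo (0 : ℝ) 1,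
          Finset.univ.inf' ⟨⟨0, by omega⟩, Finset.mem_univ _⟩ x)) /
      ((∫ x in Set.univ.pi fun _ : Fin n => Set.Ioo (0 : ℝ) 1,
          Finset.univ.sup' ⟨⟨0, by omega⟩, Finset.mem_univ _⟩ x) -
        (∫ x in Set.univ.pi fun _ : Fin n => Set.Ioo (0 : ℝ) 1,
          Finset.univ.inf' ⟨⟨0, by omega⟩, Finset.mem_univ _⟩ x))
      = -(1 / ((n : ℝ) - 1)) + ((n : ℝ) + 1) / ((n : ℝ) - 1) * ((n : ℝ) / ((n : ℝ) + 1)) ^ n := by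
  have hn' : (2 : ℝ) ≤ n := by exact_mod_cast hn
  have hr : (-1 : ℝ) < 1 / n := by linarith [one_div_pos.2 (by linarith : (0 : ℝ) < n)]
  have H : (Finset.univ : Finset (Fin n)).Nonempty := ⟨⟨0, by omega⟩, Finset.mem_univ _⟩
  rw [integral_prod_rpow_unitCube hr, integral_inf'_unitCube H, integral_sup'_unitCube H,
    Fintype.card_fin]
  have hn1 : (n : ℝ) - 1 ≠ 0 := by linarith
  field_simp
  ring
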